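/- If there is a pair of separating walks of length k in G_d, then there is a pair of separating walks of length k+2 in G_{d+1}. -/

import Mathlib

/-!
Call `{π(x, v) : x adjacent to v}` the set of in-ports of a node `v`. Walks of length
`k ≤ 2d - 3` starting at depth one stay below depth `2d`, where the in-ports are explicit:
`{1, …, d}` at odd depth, and at even depth `{0, …, d-1}`, or `{0, …, d-2, d}` when the last
pair of `v` starts with `d`. So the end nodes of a PSW have even depth, and exactly one of them
has a last pair starting with `d`. In `G_{d+1}` both end nodes can be moved on by two steps
with back-ports `d - 1` and `d`: the one whose last pair starts with `d` through new children
`(d+1, d-1)` and `(d+1, d)`, the other one to a node all of whose pairs start with at most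
`d`. The end nodes then differ in the same way with respect to `d + 1`, which gives a PSW of
length `k + 2`.
-/

namespace Paper

/-- Nodes of the tree `G_d` are finite sequences of pairs of numbers.
We represent a sequence `(a₁, …, a_i)` as the list `[a_i, …, a₁]`, i.e. in
reverse order, so that consing corresponds to appending a pair at the end. -/
abbrev Nd : Type := ℕ × ℕ

/-- `b₂⁺`: `1` if `b₂ = 0`, and `b₂` otherwise. -/
def bplus (b : ℕ) : ℕ := if b = 0 then 1 else b

/-- For `j ≥ 1`, the `j`-th smallest element of `{lo, lo+1, lo+2, …} \ {f}`.
This realises the greedy choices `c^j = min({lo,…} \ {f, c¹, …, c^{j-1}})`. -/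
def nthAvoid (lo f j : ℕ) : ℕ :=
  if lo + j - 1 < f ∨ f < lo then lo + j - 1 else lo + j

/-- The node set `V_d` of the graph `G_d`, given by the rules (G1)–(G4).
(Sequences are represented as reversed lists, the head being the last pair
`a_i` of the sequence.) -/
inductive Vd (d : ℕ) : List Nd → Prop
  /-- (G1): the empty sequence is a node. -/
  | nil : Vd d []
  /-- (G2): the sequences `((1,0)), ((2,1)), …, ((d,d−1))` are nodes. -/
  | base (k : ℕ) (h1 : 1 ≤ k) (h2 : k ≤ d) : Vd d [(k, k - 1)]
  /-- (G3): children of a node of odd length `< 2d` with last pair `(b₁, b₂)`: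
  for `j = 1, …, d−1` append `(c₁ʲ, c₂ʲ)` where `c₁ʲ` is the `j`-th smallest
  element of `{1,…,d} \ {b₂⁺}` and `c₂ʲ` the `j`-th smallest of `{1,…,d} \ {b₁}`. -/
  | odd (b₁ b₂ : ℕ) (rest : List Nd)
      (hv : Vd d ((b₁, b₂) :: rest))
      (hodd : Odd ((b₁, b₂) :: rest).length)
      (hlt : ((b₁, b₂) :: rest).length < 2 * d)
      (j : ℕ) (hj1 : 1 ≤ j) (hj2 : j ≤ d - 1) :
      Vd d ((nthAvoid 1 (bplus b₂) j, nthAvoid 1 b₁ j) :: (b₁, b₂) :: rest)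
  /-- (G4): children of a node of even positive length `< 2d` with last pair
  `(b₁, b₂)`: for `j = 1, …, d−1` append `(c₁ʲ, c₂ʲ)` where `c₁ʲ` is the `j`-th
  smallest element of `{1,…,d} \ {b₂}` and `c₂ʲ` the `j`-th smallest of
  `{0,…,d−1} \ {b₁}`. -/
  | even (b₁ b₂ : ℕ) (rest : List Nd)
      (hv : Vd d ((b₁, b₂) :: rest))
      (heven : Even ((b₁, b₂) :: rest).length)
      (hlt : ((b₁, b₂) :: rest).length < 2 * d)
      (j : ℕ) (hj1 : 1 ≤ j) (hj2 : j ≤ d - 1) :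
      Vd d ((nthAvoid 1 b₂ j, nthAvoid 0 b₁ j) :: (b₁, b₂) :: rest)

/-- The edge relation of `G_d`: `u` is a child of `v` or vice versa. -/
def Ed (d : ℕ) (v u : List Nd) : Prop :=
  Vd d v ∧ Vd d u ∧ ∃ a : Nd, u = a :: v ∨ v = a :: u

/-- The outgoing port number `π_d(v, u)` from `v` towards an adjacent node `u`:
if `u = (b₁, b₂) :: v` is a child of `v` then `b₁`, and if `v = (b₁, b₂) :: u`
is a child of `u` then `b₂`. -/
def outPort (v u : List Nd) : ℕ :=
  if u.length = v.length + 1 then u.headI.1 else v.headI.2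

/-- A pair of compatible walks (PCW) of length `k` in `G_d`:
two walks starting at `((1,0))` and `((2,1))` such that the outgoing port
numbers backwards along the walks coincide. -/
structure IsPCW (d k : ℕ) (w₁ w₂ : ℕ → List Nd) : Prop where
  klen : k ≤ 2 * d - 3
  walk₁ : ∀ j < k, Ed d (w₁ j) (w₁ (j + 1))
  walk₂ : ∀ j < k, Ed d (w₂ j) (w₂ (j + 1))
  start₁ : w₁ 0 = [(1, 0)]
  start₂ : w₂ 0 = [(2, 1)]
  compat : ∀ j, 1 ≤ j → j ≤ k →
    outPort (w₁ j) (w₁ (j - 1)) = outPort (w₂ j) (w₂ (j - 1))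

/-- A pair of separating walks (PSW): a PCW such that the last node of the
first walk has a neighbour whose outgoing port number towards it is matched
by no neighbour of the last node of the second walk. -/
structure IsPSW (d k : ℕ) (w₁ w₂ : ℕ → List Nd)
    extends IsPCW d k w₁ w₂ : Prop where
  sep : ∃ x, Ed d (w₁ k) x ∧
    ∀ y, Ed d (w₂ k) y → outPort x (w₁ k) ≠ outPort y (w₂ k)

/-- A PSW of length `k` in `G_d` is critical if there is no strictly shorter
PSW in `G_d`. -/
def IsCriticalPSW (d k : ℕ) (w₁ w₂ : ℕ → List Nd) : Prop :=
  IsPSW d k w₁ w₂ ∧ ∀ k' w₁' w₂', IsPSW d k' w₁' w₂' → k ≤ k'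

/-- The last pair of `v` starts with `p`: the parent of `v` reaches it through port `p`. -/
def EnteredVia (p : ℕ) (v : List Nd) : Prop := ∃ b r, v = (p, b) :: r

/-- The port numbers `π_d(x, v)` with which the neighbours `x` of `v` point back at `v`. -/
def inPorts (d : ℕ) (v : List Nd) : Set ℕ := {p | ∃ x, Ed d v x ∧ outPort x v = p}

@[simp]
lemma not_enteredVia_nil (p : ℕ) : ¬ EnteredVia p [] := by
  rintro ⟨_, _, h⟩
  cases h

@[simp]
lemma enteredVia_cons {p : ℕ} {a : Nd} {v : List Nd} : EnteredVia p (a :: v) ↔ a.1 = p := by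
  constructor
  · rintro ⟨b, r, h⟩
    simp [List.cons.inj h]
  · intro h
    exact ⟨a.2, v, by rw [← h]⟩

lemma nthAvoid_of_lt {lo f j : ℕ} (h : lo + j ≤ f ∨ f < lo) : nthAvoid lo f j = lo + j - 1 := by
  unfold nthAvoid; split <;> omega

lemma nthAvoid_of_le {lo f j : ℕ} (h₁ : lo ≤ f) (h₂ : f < lo + j) : nthAvoid lo f j = lo + j := by
  unfold nthAvoid; split <;> omega

lemma le_nthAvoid (lo f j : ℕ) : lo + j - 1 ≤ nthAvoid lo f j := by
  unfold nthAvoid; split <;> omega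

lemma nthAvoid_le (lo f j : ℕ) : nthAvoid lo f j ≤ lo + j := by
  unfold nthAvoid; split <;> omega

section Nodes

variable {d : ℕ}

lemma Vd.tail {a : Nd} {v : List Nd} (h : Vd d (a :: v)) : Vd d v := by
  cases h with
  | base => exact Vd.nil
  | odd _ _ _ hv => exact hv
  | even _ _ _ hv => exact hv

lemma Vd.mono {d' : ℕ} (hdd : d ≤ d') {v : List Nd} (h : Vd d v) : Vd d' v := by
  induction h with
  | nil => exact Vd.nil
  | base k h₁ h₂ => exact Vd.base k h₁ (by omega)
  | odd b₁ b₂ r _ hodd hlt j hj₁ hj₂ ih =>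
    exact Vd.odd b₁ b₂ r ih hodd (by omega) j hj₁ (by omega)
  | even b₁ b₂ r _ heven hlt j hj₁ hj₂ ih =>
    exact Vd.even b₁ b₂ r ih heven (by omega) j hj₁ (by omega)

lemma Vd.fst_bounds {a : Nd} {v : List Nd} (h : Vd d (a :: v)) : 1 ≤ a.1 ∧ a.1 ≤ d := by
  cases h with
  | base k h₁ h₂ => exact ⟨h₁, h₂⟩
  | odd b₁ b₂ r _ _ _ j hj₁ hj₂ =>
    have := le_nthAvoid 1 (bplus b₂) j
    have := nthAvoid_le 1 (bplus b₂) j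
    constructor <;> dsimp only <;> omega
  | even b₁ b₂ r _ _ _ j hj₁ hj₂ =>
    have := le_nthAvoid 1 b₂ j
    have := nthAvoid_le 1 b₂ j
    constructor <;> dsimp only <;> omega

lemma Vd.snd_bounds_of_even {a : Nd} {v : List Nd} (h : Vd d (a :: v))
    (heven : (a :: v).length % 2 = 0) : 1 ≤ a.2 ∧ a.2 ≤ d := by
  cases h with
  | base => simp at heven
  | odd b₁ b₂ r _ _ _ j hj₁ hj₂ =>
    have := le_nthAvoid 1 b₁ j
    have := nthAvoid_le 1 b₁ j
    constructor <;> dsimp only <;> omega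
  | even b₁ b₂ r _ hev =>
    rw [Nat.even_iff] at hev
    simp only [List.length_cons] at heven hev
    omega

lemma Vd.fst_le_of_mem {v : List Nd} (h : Vd d v) : ∀ a ∈ v, a.1 ≤ d := by
  induction v with
  | nil => simp
  | cons b v ih =>
    intro a ha
    rcases List.mem_cons.mp ha with rfl | ha
    · exact h.fst_bounds.2
    · exact ih h.tail a ha

@[simp]
lemma outPort_cons_self (a : Nd) (v : List Nd) : outPort (a :: v) v = a.2 := by
  unfold outPort
  rw [if_neg (by simp only [List.length_cons]; omega)]
  rfl

@[simp]
lemma outPort_self_cons (a : Nd) (v : List Nd) : outPort v (a :: v) = a.1 := by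
  simp [outPort]

lemma Ed.to_child {a : Nd} {v : List Nd} (hv : Vd d v) (h : Vd d (a :: v)) : Ed d v (a :: v) :=
  ⟨hv, h, a, Or.inl rfl⟩

lemma Ed.to_parent {a : Nd} {v : List Nd} (h : Vd d (a :: v)) : Ed d (a :: v) v :=
  ⟨h, h.tail, a, Or.inr rfl⟩

lemma Ed.mono {d' : ℕ} (hdd : d ≤ d') {v u : List Nd} (h : Ed d v u) : Ed d' v u :=
  ⟨h.1.mono hdd, h.2.1.mono hdd, h.2.2⟩

lemma Ed.length_eq {v u : List Nd} (h : Ed d v u) :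
    u.length = v.length + 1 ∨ v.length = u.length + 1 := by
  obtain ⟨-, -, a, rfl | rfl⟩ := h <;> simp

lemma Ed.length_two_steps {v z t : List Nd} (hz : Ed d v z) (ht : Ed d z t) :
    t.length % 2 = v.length % 2 ∧ t.length ≤ v.length + 2 := by
  rcases hz.length_eq with h | h <;> rcases ht.length_eq with h' | h' <;> omega

lemma walk_end {k : ℕ} {w : ℕ → List Nd} {a : Nd} (h₀ : w 0 = [a]) (ha : Vd d [a])
    (hw : ∀ j < k, Ed d (w j) (w (j + 1))) :
    Vd d (w k) ∧ (w k).length ≤ k + 1 ∧ (w k).length % 2 = (k + 1) % 2 := by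
  induction k with
  | zero => exact ⟨h₀ ▸ ha, by simp [h₀], by simp [h₀]⟩
  | succ k ih =>
    obtain ⟨-, hlen, hpar⟩ := ih fun j hj => hw j (by omega)
    have hstep := hw k (by omega)
    refine ⟨hstep.2.1, ?_⟩
    rcases hstep.length_eq with h | h <;> omega

end Nodes

section Ports

variable {d : ℕ}

lemma exists_sep_iff {v v' : List Nd} :
    (∃ x, Ed d v x ∧ ∀ y, Ed d v' y → outPort x v ≠ outPort y v') ↔
      ¬ inPorts d v ⊆ inPorts d v' := by
  rw [Set.not_subset]
  constructor
  · rintro ⟨x, hx, hsep⟩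
    exact ⟨_, ⟨x, hx, rfl⟩, fun ⟨y, hy, hp⟩ => hsep y hy hp.symm⟩
  · rintro ⟨_, ⟨x, hx, rfl⟩, hn⟩
    exact ⟨x, hx, fun y hy hp => hn ⟨y, hy, hp.symm⟩⟩

lemma fst_mem_inPorts {a : Nd} {v : List Nd} (h : Vd d (a :: v)) : a.1 ∈ inPorts d (a :: v) :=
  ⟨v, Ed.to_parent h, outPort_self_cons a v⟩

lemma nthAvoid_mem_inPorts_of_odd {b₁ b₂ : ℕ} {r : List Nd} (h : Vd d ((b₁, b₂) :: r))
    (hodd : ((b₁, b₂) :: r).length % 2 = 1) (hlt : ((b₁, b₂) :: r).length < 2 * d)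
    {j : ℕ} (hj₁ : 1 ≤ j) (hj₂ : j ≤ d - 1) : nthAvoid 1 b₁ j ∈ inPorts d ((b₁, b₂) :: r) :=
  ⟨_, Ed.to_child h (Vd.odd b₁ b₂ r h (Nat.odd_iff.mpr hodd) hlt j hj₁ hj₂),
    outPort_cons_self _ _⟩

lemma nthAvoid_mem_inPorts_of_even {b₁ b₂ : ℕ} {r : List Nd} (h : Vd d ((b₁, b₂) :: r))
    (heven : ((b₁, b₂) :: r).length % 2 = 0) (hlt : ((b₁, b₂) :: r).length < 2 * d)
    {j : ℕ} (hj₁ : 1 ≤ j) (hj₂ : j ≤ d - 1) : nthAvoid 0 b₁ j ∈ inPorts d ((b₁, b₂) :: r) :=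
  ⟨_, Ed.to_child h (Vd.even b₁ b₂ r h (Nat.even_iff.mpr heven) hlt j hj₁ hj₂),
    outPort_cons_self _ _⟩

lemma inPorts_of_odd {v : List Nd} (hv : Vd d v) (hodd : v.length % 2 = 1)
    (hlt : v.length < 2 * d) : inPorts d v = Set.Icc 1 d := by
  ext p
  constructor
  · rintro ⟨x, ⟨-, hx, a, rfl | rfl⟩, rfl⟩
    · cases hx with
      | base => simp at hodd
      | odd b₁ b₂ r _ _ _ j hj₁ hj₂ =>
        have := le_nthAvoid 1 b₁ j
        have := nthAvoid_le 1 b₁ j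
        simp only [outPort_cons_self, Set.mem_Icc]
        omega
      | even _ _ _ _ heven =>
        rw [Nat.even_iff] at heven
        omega
    · simpa using hv.fst_bounds
  · rintro ⟨hp₁, hp₂⟩
    obtain _ | ⟨⟨b₁, b₂⟩, r⟩ := v
    · simp at hodd
    obtain ⟨hb₁, hb₁'⟩ := hv.fst_bounds
    dsimp only at hb₁ hb₁'
    rcases lt_trichotomy p b₁ with hlt' | rfl | hgt
    · have hj := nthAvoid_mem_inPorts_of_odd hv hodd hlt (j := p) hp₁ (by omega)
      rwa [nthAvoid_of_lt (by omega), Nat.add_sub_cancel_left] at hj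
    · exact fst_mem_inPorts hv
    · have hj := nthAvoid_mem_inPorts_of_odd hv hodd hlt (j := p - 1) (by omega) (by omega)
      rwa [nthAvoid_of_le (by omega) (by omega), Nat.add_sub_cancel' (by omega)] at hj

open Classical in
lemma inPorts_subset_of_even {v : List Nd} (heven : v.length % 2 = 0) :
    inPorts d v ⊆ if EnteredVia d v then insert d (Set.Iio (d - 1)) else Set.Iio d := by
  rintro _ ⟨x, ⟨hv, hx, a, rfl | rfl⟩, rfl⟩
  · cases hx with
    | base k _ hk =>
      simp only [not_enteredVia_nil, ↓reduceIte, outPort_cons_self, Set.mem_Iio]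
      omega
    | odd _ _ _ _ hodd =>
      rw [Nat.odd_iff] at hodd
      omega
    | even b₁ b₂ r _ _ _ j hj₁ hj₂ =>
      have := nthAvoid_le 0 b₁ j
      by_cases hb : b₁ = d
      · subst hb
        have := nthAvoid_of_lt (lo := 0) (f := b₁) (j := j) (by omega)
        simp only [enteredVia_cons, ↓reduceIte, outPort_cons_self, Set.mem_insert_iff, Set.mem_Iio]
        omega
      · simp only [enteredVia_cons, hb, ↓reduceIte, outPort_cons_self, Set.mem_Iio]
        omega
  · have := hv.fst_bounds
    by_cases ha : a.1 = d
    · simp [ha]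
    · simp only [enteredVia_cons, ha, ↓reduceIte, outPort_self_cons, Set.mem_Iio]
      omega

open Classical in
lemma inPorts_of_even {v : List Nd} (hv : Vd d v) (heven : v.length % 2 = 0)
    (hlt : v.length < 2 * d) :
    inPorts d v = if EnteredVia d v then insert d (Set.Iio (d - 1)) else Set.Iio d := by
  refine (inPorts_subset_of_even heven).antisymm fun p hp => ?_
  obtain _ | ⟨⟨b₁, b₂⟩, r⟩ := v
  · simp only [not_enteredVia_nil, if_false, Set.mem_Iio] at hp
    refine ⟨[(p + 1, p)], Ed.to_child Vd.nil ?_, outPort_cons_self _ _⟩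
    simpa using Vd.base (d := d) (p + 1) (by omega) (by omega)
  obtain ⟨hb₁, hb₁'⟩ := hv.fst_bounds
  dsimp only at hb₁ hb₁'
  have hp' : p < d - 1 ∨ (p = d - 1 ∧ b₁ ≠ d) ∨ (p = d ∧ b₁ = d) := by
    by_cases hb : b₁ = d <;>
      simp only [hb, enteredVia_cons, ↓reduceIte, Set.mem_insert_iff, Set.mem_Iio] at hp <;> omega
  rcases lt_trichotomy p b₁ with hlt' | rfl | hgt
  · have hj := nthAvoid_mem_inPorts_of_even hv heven hlt (j := p + 1) (by omega) (by omega)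
    rwa [nthAvoid_of_lt (by omega), zero_add, Nat.add_sub_cancel] at hj
  · exact fst_mem_inPorts hv
  · have hj := nthAvoid_mem_inPorts_of_even hv heven hlt (j := p) (by omega) (by omega)
    rwa [nthAvoid_of_le (by omega) (by omega), zero_add] at hj

lemma inPorts_subset_iff_of_even (hd : 1 ≤ d) {v v' : List Nd} (hv : Vd d v) (hv' : Vd d v')
    (heven : v.length % 2 = 0) (heven' : v'.length % 2 = 0)
    (hlt : v.length < 2 * d) (hlt' : v'.length < 2 * d) :
    inPorts d v ⊆ inPorts d v' ↔ (EnteredVia d v ↔ EnteredVia d v') := by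
  rw [inPorts_of_even hv heven hlt, inPorts_of_even hv' heven' hlt']
  by_cases he : EnteredVia d v <;> by_cases he' : EnteredVia d v' <;>
    simp only [he, he', if_true, if_false, iff_true, iff_false, subset_refl, not_true]
  · exact fun h => lt_irrefl d (h (Set.mem_insert d _))
  · intro h
    have := h (Set.mem_Iio.mpr (show d - 1 < d by omega))
    simp only [Set.mem_insert_iff, Set.mem_Iio] at this
    omega

end Ports

section Extension

variable {d : ℕ}

lemma Vd.top_grandchild (hd : 2 ≤ d) {b : ℕ} {r : List Nd} (hv : Vd d ((d, b) :: r))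
    (heven : ((d, b) :: r).length % 2 = 0) (hlen : ((d, b) :: r).length + 2 ≤ 2 * d) :
    Vd (d + 1) ((d + 1, d) :: (d + 1, d - 1) :: (d, b) :: r) := by
  obtain ⟨hb, hb'⟩ := hv.snd_bounds_of_even heven
  simp only [List.length_cons] at heven hlen
  have hz := Vd.even d b r (hv.mono d.le_succ) (Nat.even_iff.mpr heven)
    (by simp only [List.length_cons]; omega) d (by omega) (by omega)
  rw [nthAvoid_of_le hb (by omega), nthAvoid_of_lt (by omega), Nat.add_comm 1 d,
    zero_add] at hz
  have ht := Vd.odd (d + 1) (d - 1) _ hz (Nat.odd_iff.mpr (by simp only [List.length_cons]; omega))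
    (by simp only [List.length_cons]; omega) d (by omega) (by omega)
  have hplus : bplus (d - 1) = d - 1 := if_neg (by omega)
  rwa [hplus, nthAvoid_of_le (by omega) (by omega), nthAvoid_of_lt (by omega), Nat.add_comm 1 d,
    Nat.add_sub_cancel] at ht

lemma exists_adj_port_pred (hd : 2 ≤ d) {v : List Nd} (hv : Vd d v) (heven : v.length % 2 = 0)
    (hlen : v.length + 2 ≤ 2 * d) (he : ¬ EnteredVia d v) :
    ∃ z, Ed (d + 1) v z ∧ outPort z v = d - 1 ∧ ∀ a ∈ z, a.1 ≤ d := by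
  obtain _ | ⟨⟨b₁, b₂⟩, r⟩ := v
  · refine ⟨[(d, d - 1)], Ed.to_child Vd.nil (Vd.base d (by omega) (by omega)), rfl, ?_⟩
    simp
  obtain ⟨hb₁, hb₁'⟩ := hv.fst_bounds
  simp only [enteredVia_cons] at he hb₁ hb₁'
  by_cases hb : b₁ = d - 1
  · subst hb
    exact ⟨r, Ed.to_parent (hv.mono d.le_succ), outPort_self_cons _ _,
      fun a ha => hv.fst_le_of_mem a (List.mem_cons_of_mem _ ha)⟩
  have hz := Vd.even b₁ b₂ r (hv.mono d.le_succ) (Nat.even_iff.mpr heven) (by omega)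
    (d - 1) (by omega) (by omega)
  refine ⟨_, Ed.to_child (hv.mono d.le_succ) hz, ?_, ?_⟩
  · rw [outPort_cons_self, nthAvoid_of_le (Nat.zero_le _) (by omega), zero_add]
  · intro a ha
    rcases List.mem_cons.mp ha with rfl | ha
    · have := nthAvoid_le 1 b₂ (d - 1)
      dsimp only
      omega
    · exact hv.fst_le_of_mem a ha

lemma exists_adj_port_top (hd : 2 ≤ d) {z : List Nd} (hz : Vd (d + 1) z)
    (hodd : z.length % 2 = 1) (hlen : z.length < 2 * (d + 1)) (hfst : ∀ a ∈ z, a.1 ≤ d) :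
    ∃ t, Ed (d + 1) z t ∧ outPort t z = d ∧ ∀ a ∈ t, a.1 ≤ d := by
  obtain _ | ⟨⟨c₁, c₂⟩, r⟩ := z
  · simp at hodd
  have hc₁ : 1 ≤ c₁ := hz.fst_bounds.1
  have hc₁' : c₁ ≤ d := hfst _ List.mem_cons_self
  by_cases hc : c₁ = d
  · subst hc
    exact ⟨r, Ed.to_parent hz, outPort_self_cons _ _,
      fun a ha => hfst a (List.mem_cons_of_mem _ ha)⟩
  have ht := Vd.odd c₁ c₂ r hz (Nat.odd_iff.mpr hodd) hlen (d - 1) (by omega) (by omega)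
  refine ⟨_, Ed.to_child hz ht, ?_, ?_⟩
  · rw [outPort_cons_self, nthAvoid_of_le hc₁ (by omega)]
    omega
  · intro a ha
    rcases List.mem_cons.mp ha with rfl | ha
    · have := nthAvoid_le 1 (bplus c₂) (d - 1)
      dsimp only
      omega
    · exact hfst a ha

lemma exists_extension (hd : 2 ≤ d) {v : List Nd} (hv : Vd d v) (heven : v.length % 2 = 0)
    (hlen : v.length + 2 ≤ 2 * d) :
    ∃ z t, Ed (d + 1) v z ∧ Ed (d + 1) z t ∧ outPort z v = d - 1 ∧ outPort t z = d ∧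
      (EnteredVia (d + 1) t ↔ EnteredVia d v) := by
  by_cases he : EnteredVia d v
  · obtain ⟨b, r, rfl⟩ := he
    have ht := Vd.top_grandchild hd hv heven hlen
    exact ⟨_, _, Ed.to_child (hv.mono d.le_succ) ht.tail, Ed.to_child ht.tail ht,
      outPort_cons_self _ _, outPort_cons_self _ _, by simp⟩
  · obtain ⟨z, hvz, hpz, hz⟩ := exists_adj_port_pred hd hv heven hlen he
    have hzlen := hvz.length_eq
    obtain ⟨t, hzt, hpt, ht⟩ := exists_adj_port_top hd hvz.2.1 (by omega) (by omega) hz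
    refine ⟨z, t, hvz, hzt, hpz, hpt, iff_of_false ?_ he⟩
    rintro ⟨b, r, rfl⟩
    simpa using ht _ List.mem_cons_self

end Extension

section Walks

variable {d k : ℕ} {w₁ w₂ : ℕ → List Nd}

lemma IsPCW.mono (h : IsPCW d k w₁ w₂) : IsPCW (d + 1) k w₁ w₂ where
  klen := by have := h.klen; omega
  walk₁ j hj := (h.walk₁ j hj).mono d.le_succ
  walk₂ j hj := (h.walk₂ j hj).mono d.le_succ
  start₁ := h.start₁
  start₂ := h.start₂
  compat := h.compat

lemma IsPCW.snoc (h : IsPCW d k w₁ w₂) (hk : k + 1 ≤ 2 * d - 3) {z₁ z₂ : List Nd}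
    (h₁ : Ed d (w₁ k) z₁) (h₂ : Ed d (w₂ k) z₂) (hport : outPort z₁ (w₁ k) = outPort z₂ (w₂ k)) :
    IsPCW d (k + 1) (Function.update w₁ (k + 1) z₁) (Function.update w₂ (k + 1) z₂) := by
  have hold : ∀ (w : ℕ → List Nd) (z : List Nd) j, j ≤ k → Function.update w (k + 1) z j = w j :=
    fun w z j hj => Function.update_of_ne (show j ≠ k + 1 by omega) z w
  refine ⟨hk, fun j hj => ?_, fun j hj => ?_, ?_, ?_, fun j hj₁ hj₂ => ?_⟩
  · rcases Nat.lt_succ_iff_lt_or_eq.mp hj with hjk | rfl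
    · rw [hold _ _ j hjk.le, hold _ _ (j + 1) hjk]
      exact h.walk₁ j hjk
    · rwa [hold _ _ j le_rfl, Function.update_self]
  · rcases Nat.lt_succ_iff_lt_or_eq.mp hj with hjk | rfl
    · rw [hold _ _ j hjk.le, hold _ _ (j + 1) hjk]
      exact h.walk₂ j hjk
    · rwa [hold _ _ j le_rfl, Function.update_self]
  · rw [hold _ _ 0 (Nat.zero_le k), h.start₁]
  · rw [hold _ _ 0 (Nat.zero_le k), h.start₂]
  · rcases Nat.lt_or_ge j (k + 1) with hjk | hjk
    · rw [hold _ _ j (by omega), hold _ _ (j - 1) (by omega), hold _ _ j (by omega),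
        hold _ _ (j - 1) (by omega)]
      exact h.compat j hj₁ (by omega)
    · obtain rfl : j = k + 1 := by omega
      rwa [Function.update_self, Function.update_self, Nat.add_sub_cancel, hold _ _ k le_rfl,
        hold _ _ k le_rfl]

end Walks

/-- A PSW of length `k` in `G_d` can be extended to a PSW of length `k + 2`
in `G_{d+1}`. -/
theorem PSW_extend (d k : ℕ) (hd : 2 ≤ d) (w₁ w₂ : ℕ → List Nd)
    (hpsw : IsPSW d k w₁ w₂) :
    ∃ w₁' w₂' : ℕ → List Nd, IsPSW (d + 1) (k + 2) w₁' w₂' := by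
  have hpcw := hpsw.toIsPCW
  have hk := hpcw.klen
  obtain ⟨hv₁, hlen₁, hpar₁⟩ := walk_end hpcw.start₁ (Vd.base 1 le_rfl (by omega)) hpcw.walk₁
  obtain ⟨hv₂, hlen₂, hpar₂⟩ := walk_end hpcw.start₂ (Vd.base 2 (by omega) hd) hpcw.walk₂
  have hsep := exists_sep_iff.mp hpsw.sep
  have heven : (w₁ k).length % 2 = 0 := by
    by_contra hodd
    refine hsep (le_of_eq ?_)
    rw [inPorts_of_odd hv₁ (by omega) (by omega), inPorts_of_odd hv₂ (by omega) (by omega)]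
  have htype : ¬ (EnteredVia d (w₁ k) ↔ EnteredVia d (w₂ k)) := fun h =>
    hsep ((inPorts_subset_iff_of_even (by omega) hv₁ hv₂ heven (by omega) (by omega)
      (by omega)).mpr h)
  obtain ⟨z₁, t₁, hz₁, ht₁, hpz₁, hpt₁, he₁⟩ := exists_extension hd hv₁ heven (by omega)
  obtain ⟨z₂, t₂, hz₂, ht₂, hpz₂, hpt₂, he₂⟩ := exists_extension hd hv₂ (by omega) (by omega)
  have hpcw' := (hpcw.mono.snoc (by omega) hz₁ hz₂ (hpz₁.trans hpz₂.symm)).snoc (by omega)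
    (by rwa [Function.update_self]) (by rwa [Function.update_self])
    (by rw [Function.update_self, Function.update_self, hpt₁, hpt₂])
  refine ⟨_, _, hpcw', ?_⟩
  rw [Function.update_self, Function.update_self, exists_sep_iff]
  obtain ⟨hpar₁', hlen₁'⟩ := Ed.length_two_steps hz₁ ht₁
  obtain ⟨hpar₂', hlen₂'⟩ := Ed.length_two_steps hz₂ ht₂
  rw [inPorts_subset_iff_of_even (by omega) ht₁.2.1 ht₂.2.1 (by omega) (by omega) (by omega)
    (by omega), he₁, he₂]
  exact htype

end Paper
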